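/- arXiv:math/9301212 — 3 statements merged into one kernel-verified Lean document; each statement's English description precedes it below -/
import Mathlib

section
/- The energy of a round circle of any radius r > 0 in R^3 equals 4. Specifically, for γ(u) = (r cos(u/r), r sin(u/r), 0), u ∈ [0, 2πr], one has ∬ (1/|γ(u)-γ(v)|^2 - 1/D(γ(u),γ(v))^2) du dv = 4. -/
/-!
The integrand depends only on `t = u - v`: the chord is `2r |sin (t / 2r)|` and the arc distance is
the norm of `t` in `ℝ ⧸ 2πrℤ`, so it is a `2πr`-periodic even function of `t`. Periodicity makes
every inner integral equal to the integral over one period, and evenness reduces that to twice the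
integral over `[0, πr]`, where the arc distance is `t` itself. Substituting `x = t / 2r` leaves
`(2r)⁻¹ ∫₀^{π/2} (1 / sin² x - 1 / x²) dx`, and `x⁻¹ - cot x` is an antiderivative which tends
to `0` at `0⁺`, so this integral is `2 / π`. Hence every inner integral is `2 / (πr)` and the
energy is `2πr · 2 / (πr) = 4`.
-/

open Real intervalIntegral

/-- The round circle of radius `r` in ℝ³, parameterized by arc length. -/
noncomputable def circleCurve (r : ℝ) (u : ℝ) : EuclideanSpace ℝ (Fin 3) :=
  WithLp.toLp 2 ![r * Real.cos (u / r), r * Real.sin (u / r), 0]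

open Filter Set Topology
open MeasureTheory (volume)

theorem AddCircle.norm_coe_eq_min_abs {p t : ℝ} (ht : |t| ≤ p) :
    ‖(t : AddCircle p)‖ = min |t| (p - |t|) := by
  wlog h0 : 0 ≤ t generalizing t
  · simpa [AddCircle.coe_neg] using this (t := -t) (by rwa [abs_neg]) (by linarith)
  rw [abs_of_nonneg h0] at ht ⊢
  rcases (h0.trans ht).eq_or_lt with rfl | hp
  · simp [le_antisymm ht h0]
  rcases le_total t (p / 2) with h | h
  · rw [min_eq_left (by linarith), (AddCircle.norm_coe_eq_abs_iff _ hp.ne').2, abs_of_nonneg h0]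
    rwa [abs_of_nonneg h0, abs_of_pos hp]
  · have hshift : ((t - p : ℝ) : AddCircle p) = t := by
      rw [← AddCircle.coe_add_period, sub_add_cancel]
    rw [min_eq_right (by linarith), ← hshift, (AddCircle.norm_coe_eq_abs_iff _ hp.ne').2,
      abs_of_nonpos (by linarith), neg_sub]
    rw [abs_of_nonpos (by linarith), abs_of_pos hp]
    linarith

section PeriodicIntegral

variable {E : Type*} [NormedAddCommGroup E] [NormedSpace ℝ E] {f : ℝ → E} {T : ℝ}

theorem Function.Periodic.intervalIntegral_comp_sub_eq (hf : Function.Periodic f T) (u : ℝ) :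
    ∫ v in 0..T, f (u - v) = ∫ x in 0..T, f x := by
  rw [integral_comp_sub_left, sub_zero]
  simpa using hf.intervalIntegral_add_eq (u - T) 0

theorem Function.Periodic.intervalIntegral_eq_two_smul_of_even (hf : Function.Periodic f T)
    (heven : Function.Even f) (hint : IntervalIntegrable f volume 0 (T / 2)) :
    ∫ x in 0..T, f x = (2 : ℝ) • ∫ x in 0..T / 2, f x := by
  have hint_neg : IntervalIntegrable f volume (-(T / 2)) 0 := by
    simpa [heven _] using ((IntervalIntegrable.iff_comp_neg).1 hint).symm
  have hintegral_neg : ∫ x in -(T / 2)..0, f x = ∫ x in 0..T / 2, f x := by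
    simpa [heven _] using (integral_comp_neg (a := 0) (b := T / 2) f).symm
  calc ∫ x in 0..T, f x = ∫ x in -(T / 2)..T / 2, f x := by
        simpa [← sub_eq_neg_add, sub_half] using hf.intervalIntegral_add_eq 0 (-(T / 2))
    _ = (∫ x in -(T / 2)..0, f x) + ∫ x in 0..T / 2, f x :=
        (integral_add_adjacent_intervals hint_neg hint).symm
    _ = (2 : ℝ) • ∫ x in 0..T / 2, f x := by rw [hintegral_neg, two_smul]

end PeriodicIntegral

theorem hasDerivAt_inv_sub_cot {x : ℝ} (hx : x ≠ 0) (hsin : sin x ≠ 0) :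
    HasDerivAt (fun y => y⁻¹ - cot y) ((sin x ^ 2)⁻¹ - (x ^ 2)⁻¹) x := by
  simp only [cot_eq_cos_div_sin]
  refine ((hasDerivAt_inv hx).fun_sub
    ((hasDerivAt_cos x).fun_div (hasDerivAt_sin x) hsin)).congr_deriv ?_
  field_simp
  linear_combination x ^ 2 * sin_sq_add_cos_sq x

theorem hasDerivAt_inv_sub_cot_of_mem_Ioo {x : ℝ} (hx : x ∈ Ioo 0 (π / 2)) :
    HasDerivAt (fun y => y⁻¹ - cot y) ((sin x ^ 2)⁻¹ - (x ^ 2)⁻¹) x :=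
  hasDerivAt_inv_sub_cot hx.1.ne' (sin_pos_of_pos_of_lt_pi hx.1 (by linarith [hx.2, pi_pos])).ne'

theorem inv_sub_cot_mem_Icc {x : ℝ} (hx : x ∈ Ioo 0 (π / 2)) :
    x⁻¹ - cot x ∈ Icc 0 (π / 4 * x) := by
  obtain ⟨hx0, hx1⟩ := hx
  have hsin : 0 < sin x := sin_pos_of_pos_of_lt_pi hx0 (by linarith [pi_pos])
  have hcos : 0 < cos x := cos_pos_of_mem_Ioo ⟨by linarith, hx1⟩
  have hform : x⁻¹ - cot x = (sin x - x * cos x) / (x * sin x) := by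
    rw [cot_eq_cos_div_sin]; field_simp
  have hx_cos_le_sin : x * cos x ≤ sin x := by
    have := le_tan hx0.le hx1
    rwa [tan_eq_sin_div_cos, le_div_iff₀ hcos] at this
  rw [hform]
  refine ⟨div_nonneg (by linarith) (by positivity), ?_⟩
  rw [div_le_iff₀ (by positivity)]
  have hcos_ge := mul_le_mul_of_nonneg_left (one_sub_sq_div_two_le_cos (x := x)) hx0.le
  calc sin x - x * cos x ≤ x ^ 3 / 2 := by linarith [sin_le hx0.le]
    _ = π / 4 * x * (x * (2 / π * x)) := by field_simp; ring
    _ ≤ π / 4 * x * (x * sin x) := by gcongr; exact mul_le_sin hx0.le hx1.le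

theorem tendsto_inv_sub_cot_nhdsGT_zero :
    Tendsto (fun x => x⁻¹ - cot x) (𝓝[>] 0) (𝓝 0) := by
  have hlin : Tendsto (fun x : ℝ => π / 4 * x) (𝓝[>] 0) (𝓝 0) := by
    simpa using ((continuous_const_mul (π / 4)).tendsto 0).mono_left nhdsWithin_le_nhds
  have hbounds : ∀ᶠ x in 𝓝[>] 0, x⁻¹ - cot x ∈ Icc 0 (π / 4 * x) :=
    eventually_of_mem (Ioo_mem_nhdsGT pi_div_two_pos) fun x hx => inv_sub_cot_mem_Icc hx
  exact tendsto_of_tendsto_of_tendsto_of_le_of_le' tendsto_const_nhds hlin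
    (hbounds.mono fun _ h => h.1) (hbounds.mono fun _ h => h.2)

theorem continuousOn_inv_sub_cot : ContinuousOn (fun x => x⁻¹ - cot x) (Icc 0 (π / 2)) := by
  intro x hx
  rcases hx.1.eq_or_lt with rfl | hx0
  · -- at `0` both `0⁻¹` and `cot 0 = cos 0 / sin 0` are the junk value `0`
    have h : ContinuousWithinAt (fun x => x⁻¹ - cot x) (Ioi 0) 0 := by
      simpa [ContinuousWithinAt, cot_eq_cos_div_sin] using tendsto_inv_sub_cot_nhdsGT_zero
    exact (continuousWithinAt_Ioi_iff_Ici.1 h).mono Icc_subset_Ici_self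
  · have hsin : sin x ≠ 0 := (sin_pos_of_pos_of_lt_pi hx0 (by linarith [hx.2, pi_pos])).ne'
    exact (hasDerivAt_inv_sub_cot hx0.ne' hsin).continuousAt.continuousWithinAt

theorem inv_sq_le_inv_sin_sq {x : ℝ} (hx : x ∈ Ioo 0 π) : (x ^ 2)⁻¹ ≤ (sin x ^ 2)⁻¹ := by
  have hsin := sin_pos_of_pos_of_lt_pi hx.1 hx.2
  gcongr
  exact sin_le hx.1.le

theorem intervalIntegrable_inv_sin_sq_sub_inv_sq :
    IntervalIntegrable (fun x => (sin x ^ 2)⁻¹ - (x ^ 2)⁻¹) volume 0 (π / 2) := by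
  have h := pi_div_two_pos.le
  refine intervalIntegrable_deriv_of_nonneg (g := fun y => y⁻¹ - cot y) ?_ ?_ ?_ <;>
    simp only [uIcc_of_le h, min_eq_left h, max_eq_right h]
  · exact continuousOn_inv_sub_cot
  · exact fun x hx => hasDerivAt_inv_sub_cot_of_mem_Ioo hx
  · exact fun x hx => sub_nonneg.2 (inv_sq_le_inv_sin_sq ⟨hx.1, by linarith [hx.2, pi_pos]⟩)

theorem integral_inv_sin_sq_sub_inv_sq :
    ∫ x in 0..π / 2, ((sin x ^ 2)⁻¹ - (x ^ 2)⁻¹) = 2 / π := by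
  rw [integral_eq_sub_of_hasDerivAt_of_le pi_div_two_pos.le continuousOn_inv_sub_cot
    (fun x hx => hasDerivAt_inv_sub_cot_of_mem_Ioo hx) intervalIntegrable_inv_sin_sq_sub_inv_sq]
  simp [cot_eq_cos_div_sin]

theorem norm_circleCurve_sub_sq (r u v : ℝ) :
    ‖circleCurve r u - circleCurve r v‖ ^ 2 = 4 * r ^ 2 * sin ((u - v) / (2 * r)) ^ 2 := by
  rw [EuclideanSpace.norm_eq, sq_sqrt (by positivity)]
  simp only [circleCurve, Fin.sum_univ_three, PiLp.sub_apply, Matrix.cons_val_zero,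
    Matrix.cons_val_one, Matrix.cons_val_two, Matrix.head_cons, Matrix.tail_cons, sub_zero,
    Real.norm_eq_abs, sq_abs]
  rw [sin_sq_eq_half_sub, show 2 * ((u - v) / (2 * r)) = u / r - v / r by ring, cos_sub]
  linear_combination r ^ 2 * sin_sq_add_cos_sq (u / r) + r ^ 2 * sin_sq_add_cos_sq (v / r)

/-- The arc distance on a circle of length `2πr` is the norm in `AddCircle (2πr)`. -/
noncomputable def circleEnergyDensity (r t : ℝ) : ℝ :=
  1 / (4 * r ^ 2 * sin (t / (2 * r)) ^ 2) - 1 / ‖(t : AddCircle (2 * π * r))‖ ^ 2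

theorem circleEnergyDensity_periodic (r : ℝ) :
    Function.Periodic (circleEnergyDensity r) (2 * π * r) := by
  intro t
  rcases eq_or_ne r 0 with rfl | hr
  · simp
  have hangle : (t + 2 * π * r) / (2 * r) = t / (2 * r) + π := by field_simp
  rw [circleEnergyDensity, circleEnergyDensity, hangle, sin_add_pi, neg_sq,
    AddCircle.coe_add_period]

theorem circleEnergyDensity_even (r : ℝ) : Function.Even (circleEnergyDensity r) := by
  intro t
  simp [circleEnergyDensity, neg_div]

theorem energyIntegrand_eq_circleEnergyDensity {r u v : ℝ} (hu : u ∈ Icc 0 (2 * π * r))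
    (hv : v ∈ Icc 0 (2 * π * r)) :
    1 / ‖circleCurve r u - circleCurve r v‖ ^ 2 - 1 / (min |u - v| (2 * π * r - |u - v|)) ^ 2 =
      circleEnergyDensity r (u - v) := by
  have huv : |u - v| ≤ 2 * π * r :=
    abs_sub_le_iff.2 ⟨by linarith [hu.2, hv.1], by linarith [hu.1, hv.2]⟩
  rw [circleEnergyDensity, norm_circleCurve_sub_sq, AddCircle.norm_coe_eq_min_abs huv]

theorem circleEnergyDensity_eq_of_mem_Icc {r t : ℝ} (hr : 0 < r) (ht : t ∈ Icc 0 (π * r)) :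
    circleEnergyDensity r t =
      (2 * r)⁻¹ ^ 2 * ((sin (t / (2 * r)) ^ 2)⁻¹ - ((t / (2 * r)) ^ 2)⁻¹) := by
  have hnorm : ‖(t : AddCircle (2 * π * r))‖ = t := by
    rw [AddCircle.norm_coe_eq_min_abs, abs_of_nonneg ht.1]
    · exact min_eq_left (by linarith [ht.2])
    · rw [abs_of_nonneg ht.1]; linarith [ht.2, mul_pos pi_pos hr]
  rw [circleEnergyDensity, hnorm]
  field_simp
  ring

theorem intervalIntegrable_circleEnergyDensity {r : ℝ} (hr : 0 < r) :
    IntervalIntegrable (circleEnergyDensity r) volume 0 (π * r) := by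
  have h := (intervalIntegrable_inv_sin_sq_sub_inv_sq.comp_mul_left (c := (2 * r)⁻¹)).const_mul
    ((2 * r)⁻¹ ^ 2)
  rw [zero_div, show π / 2 / (2 * r)⁻¹ = π * r by field_simp] at h
  refine h.congr fun t ht => ?_
  rw [uIoc_of_le (by positivity)] at ht
  simp only [circleEnergyDensity_eq_of_mem_Icc hr (Ioc_subset_Icc_self ht), inv_mul_eq_div]

theorem integral_circleEnergyDensity_half {r : ℝ} (hr : 0 < r) :
    ∫ t in 0..π * r, circleEnergyDensity r t = 1 / (π * r) := by
  have hscaled : ∫ t in 0..π * r, circleEnergyDensity r t =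
      ∫ t in 0..π * r, (2 * r)⁻¹ ^ 2 * ((sin (t / (2 * r)) ^ 2)⁻¹ - ((t / (2 * r)) ^ 2)⁻¹) := by
    refine integral_congr fun t ht => circleEnergyDensity_eq_of_mem_Icc hr ?_
    rwa [uIcc_of_le (by positivity)] at ht
  rw [hscaled, integral_const_mul, integral_comp_div (fun x => (sin x ^ 2)⁻¹ - (x ^ 2)⁻¹)
    (by positivity), zero_div, show π * r / (2 * r) = π / 2 by field_simp,
    integral_inv_sin_sq_sub_inv_sq, smul_eq_mul]
  field_simp

theorem integral_circleEnergyDensity {r : ℝ} (hr : 0 < r) :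
    ∫ t in 0..2 * π * r, circleEnergyDensity r t = 2 / (π * r) := by
  have hhalf : 2 * π * r / 2 = π * r := by ring
  rw [(circleEnergyDensity_periodic r).intervalIntegral_eq_two_smul_of_even
    (circleEnergyDensity_even r) (by rw [hhalf]; exact intervalIntegrable_circleEnergyDensity hr),
    hhalf, integral_circleEnergyDensity_half hr, smul_eq_mul]
  ring

/-- The energy of a round circle of radius `r` equals 4. -/
theorem energy_circle_eq_four (r : ℝ) (hr : 0 < r) :
    (∫ u in (0:ℝ)..(2 * π * r), ∫ v in (0:ℝ)..(2 * π * r),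
      (1 / ‖circleCurve r u - circleCurve r v‖ ^ 2
        - 1 / (min |u - v| (2 * π * r - |u - v|)) ^ 2)) = 4 := by
  have hL : 0 ≤ 2 * π * r := by positivity
  have hinner : ∀ u ∈ uIcc 0 (2 * π * r), (∫ v in (0:ℝ)..(2 * π * r),
      (1 / ‖circleCurve r u - circleCurve r v‖ ^ 2
        - 1 / (min |u - v| (2 * π * r - |u - v|)) ^ 2)) = 2 / (π * r) := by
    intro u hu
    rw [uIcc_of_le hL] at hu
    rw [integral_congr fun v hv =>
        energyIntegrand_eq_circleEnergyDensity hu (by rwa [uIcc_of_le hL] at hv),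
      (circleEnergyDensity_periodic r).intervalIntegral_comp_sub_eq,
      integral_circleEnergyDensity hr]
  rw [integral_congr hinner, integral_const, smul_eq_mul]
  field_simp
  ring
end

section
/- Let f : R -> R be Lipschitz with constant C and f(u) ≥ m > 0 for all u. Define ε_+ = ∫_u^{u+ε} f(w) dw. Then for all sufficiently small ε > 0, |1/ε_+ - 1/(f(u)ε) + (1/f(u)^2)∫_0^1 (1-t) f'(u + εt) dt| ≤ K·ε for a constant K depending only on C and m. -/
/-!
Substituting `w = u + ε t` and integrating by parts against `1 - t` (legitimate because Lipschitz
functions are absolutely continuous) gives the exact identity `ε₊ = ε f(u) + ε² J` with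
`J = ∫₀¹ (1 - t) f'(u + ε t) dt` and `|J| ≤ C`. Consequently
`1/ε₊ - 1/(f(u) ε) + J/f(u)² = ε² J² / (f(u)² ε₊)`, and `ε₊ ≥ m ε` bounds this by `C²/m³ · ε`
for every `ε > 0`.
-/

open intervalIntegral

theorem AbsolutelyContinuousOnInterval.integral_sub_mul_deriv {φ : ℝ → ℝ} {a b : ℝ}
    (hφ : AbsolutelyContinuousOnInterval φ a b) :
    ∫ t in a..b, (b - t) * deriv φ t = (∫ t in a..b, φ t) - (b - a) * φ a := by
  have hlin : AbsolutelyContinuousOnInterval (fun t => b - t) a b :=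
    ContDiffOn.absolutelyContinuousOnInterval (by fun_prop)
  rw [hlin.integral_mul_deriv_eq_deriv_mul hφ]
  have hderiv (t : ℝ) : deriv (fun t => b - t) t = -1 := by simp
  simp only [hderiv, sub_self, zero_mul, zero_sub, neg_one_mul, integral_neg]
  ring

theorem deriv_comp_const_add_mul (f : ℝ → ℝ) (u ε t : ℝ) :
    deriv (fun t => f (u + ε * t)) t = ε * deriv f (u + ε * t) :=
  (deriv_comp_mul_left (f := fun s => f (u + s)) ε t).trans (by rw [deriv_comp_const_add]; rfl)

theorem LipschitzWith.integral_eq_mul_add_sq_mul_integral_deriv {C : NNReal} {f : ℝ → ℝ}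
    (hf : LipschitzWith C f) (u ε : ℝ) :
    ∫ w in u..(u + ε), f w
      = ε * f u + ε ^ 2 * ∫ t in (0:ℝ)..1, (1 - t) * deriv f (u + ε * t) := by
  have hφ : LipschitzWith (C * (0 + ‖ε‖₊)) (fun t => f (u + ε * t)) :=
    hf.comp ((LipschitzWith.const u).add (lipschitzWith_smul ε))
  have htaylor := hφ.lipschitzOnWith.absolutelyContinuousOnInterval.integral_sub_mul_deriv
    (a := 0) (b := 1)
  simp only [deriv_comp_const_add_mul, mul_left_comm _ ε, integral_const_mul] at htaylor
  have hsubst := smul_integral_comp_add_mul (a := 0) (b := 1) f ε u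
  simp only [smul_eq_mul, mul_zero, add_zero, mul_one, sub_zero, one_mul] at htaylor hsubst
  linear_combination -ε * htaylor - hsubst

theorem LipschitzWith.abs_integral_one_sub_mul_deriv_le {C : NNReal} {f : ℝ → ℝ}
    (hf : LipschitzWith C f) (u ε : ℝ) :
    |∫ t in (0:ℝ)..1, (1 - t) * deriv f (u + ε * t)| ≤ C := by
  have hbound : ∀ t ∈ Set.uIoc (0:ℝ) 1, ‖(1 - t) * deriv f (u + ε * t)‖ ≤ C := by
    intro t ht
    rw [Set.uIoc_of_le zero_le_one] at ht
    rw [norm_mul, Real.norm_of_nonneg (by linarith [ht.2])]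
    exact (mul_le_of_le_one_left (norm_nonneg _) (by linarith [ht.1])).trans
      (norm_deriv_le_of_lipschitz hf)
  simpa using norm_integral_le_of_norm_le_const hbound

theorem mul_le_integral_of_le {f : ℝ → ℝ} {m : ℝ} (hf : Continuous f) (hmf : ∀ x, m ≤ f x)
    (u : ℝ) {ε : ℝ} (hε : 0 ≤ ε) : ε * m ≤ ∫ w in u..(u + ε), f w := by
  have hmono : ∫ _ in u..(u + ε), m ≤ ∫ w in u..(u + ε), f w :=
    integral_mono_on (le_add_of_nonneg_right hε) intervalIntegrable_const
      (hf.intervalIntegrable _ _) (fun x _ => hmf x)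
  simpa using hmono

theorem abs_one_div_sub_one_div_add_le {m F P J C ε : ℝ} (hm : 0 < m) (hF : m ≤ F)
    (hε : 0 < ε) (hP : ε * m ≤ P) (hJ : |J| ≤ C) (hPeq : P = ε * F + ε ^ 2 * J) :
    |1 / P - 1 / (F * ε) + 1 / F ^ 2 * J| ≤ C ^ 2 / m ^ 3 * ε := by
  have hF0 : 0 < F := hm.trans_le hF
  have hP0 : 0 < P := (mul_pos hε hm).trans_le hP
  have hidentity : 1 / P - 1 / (F * ε) + 1 / F ^ 2 * J = ε ^ 2 * J ^ 2 / (F ^ 2 * P) := by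
    field_simp
    rw [hPeq]
    ring
  have hJsq : J ^ 2 ≤ C ^ 2 := sq_le_sq' (abs_le.1 hJ).1 (abs_le.1 hJ).2
  rw [hidentity, abs_of_nonneg (by positivity)]
  calc ε ^ 2 * J ^ 2 / (F ^ 2 * P) ≤ ε ^ 2 * C ^ 2 / (m ^ 2 * (ε * m)) := by
        gcongr
    _ = C ^ 2 / m ^ 3 * ε := by field_simp

/-- Asymptotic expansion of `1/ε₊` where `ε₊ = ∫_u^{u+ε} f`, for a Lipschitz `f ≥ m > 0`,
with error constant `K` depending only on the Lipschitz constant `C` and `m`. -/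
theorem inv_eps_plus_expansion (C : NNReal) (m : ℝ) (hm : 0 < m) :
    ∃ K : ℝ, ∀ f : ℝ → ℝ, LipschitzWith C f → (∀ u, m ≤ f u) → ∀ u : ℝ,
      ∃ ε₀ > 0, ∀ ε : ℝ, 0 < ε → ε < ε₀ →
        |1 / (∫ w in u..(u + ε), f w) - 1 / (f u * ε)
          + (1 / (f u) ^ 2) * ∫ t in (0:ℝ)..1, (1 - t) * deriv f (u + ε * t)| ≤ K * ε := by
  refine ⟨(C : ℝ) ^ 2 / m ^ 3, fun f hf hmf u => ⟨1, one_pos, fun ε hε _ => ?_⟩⟩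
  exact abs_one_div_sub_one_div_add_le hm (hmf u) hε
    (mul_le_integral_of_le hf.continuous hmf u hε.le)
    (hf.abs_integral_one_sub_mul_deriv_le u ε)
    (hf.integral_eq_mul_add_sq_mul_integral_deriv u ε)
end

section
/- If f : R/lZ -> R is Lipschitz and bounded below by m > 0, then ∫_{R/lZ} (1/f(u)) [∫_0^1 (1-t)(f'(u + εt) - f'(u - εt)) dt] du → 0 as ε → 0. -/
/-!
Write `g = f'`, which is measurable, `l`-periodic and bounded by `C`, and `h = 1 / f`, which is
`l`-periodic and `C / m²`-Lipschitz. After exchanging the `u`- and `t`-integrals, the inner integral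
`∫₀ˡ h(u) (g(u + s) - g(u - s)) du` with `s = εt` is, by translating each of its two terms over a
full period, equal to `∫₀ˡ g(v) (h(v - s) - h(v + s)) dv`. The difference now falls on the
Lipschitz function `h`, so it is `O(|s|)`, and the whole expression is `O(|ε|)`.
-/

open intervalIntegral Filter MeasureTheory Set Function
open scoped NNReal Topology Interval

theorem Function.Periodic.deriv {𝕜 F : Type*} [NontriviallyNormedField 𝕜] [NormedAddCommGroup F]
    [NormedSpace 𝕜 F] {f : 𝕜 → F} {l : 𝕜} (hf : Periodic f l) :
    Periodic (deriv f) l := fun x => by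
  rw [← deriv_comp_add_const, funext hf]

theorem LipschitzWith.one_div_of_le {α : Type*} [PseudoMetricSpace α] {f : α → ℝ} {C : ℝ≥0}
    {m : ℝ} (hf : LipschitzWith C f) (hm : 0 < m) (hmf : ∀ x, m ≤ f x) :
    LipschitzWith (C / (m ^ 2).toNNReal) (fun x => 1 / f x) := by
  refine LipschitzWith.of_dist_le_mul fun x y => ?_
  have hx := hm.trans_le (hmf x)
  have hy := hm.trans_le (hmf y)
  have hm2 : m ^ 2 ≤ f x * f y := by rw [sq]; exact mul_le_mul (hmf x) (hmf y) hm.le hx.le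
  have hdist : |f y - f x| ≤ C * dist x y := by
    rw [abs_sub_comm, ← Real.dist_eq]; exact hf.dist_le_mul x y
  rw [NNReal.coe_div, Real.coe_toNNReal _ (by positivity), Real.dist_eq,
    div_sub_div _ _ hx.ne' hy.ne', abs_div, abs_of_pos (mul_pos hx hy), one_mul, mul_one,
    div_mul_eq_mul_div]
  exact div_le_div₀ (by positivity) hdist (by positivity) hm2

theorem Function.Periodic.intervalIntegral_comp_add_right {E : Type*} [NormedAddCommGroup E]
    [NormedSpace ℝ E] {φ : ℝ → E} {l : ℝ} (hφ : Periodic φ l) (s : ℝ) :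
    ∫ u in 0..l, φ (u + s) = ∫ u in 0..l, φ u := by
  rw [integral_comp_add_right, zero_add, add_comm, hφ.intervalIntegral_add_eq s 0, zero_add]

theorem Continuous.intervalIntegrable_mul_of_bounded {g h : ℝ → ℝ} {B : ℝ} (hh : Continuous h)
    (hg : Measurable g) (hgB : ∀ x, ‖g x‖ ≤ B) (a b : ℝ) :
    IntervalIntegrable (fun u => g u * h u) volume a b :=
  intervalIntegrable_iff.2 <|
    hh.integrableOn_uIoc.bdd_mul hg.aestronglyMeasurable (ae_of_all _ hgB)

section SymmetricDifference

variable {g h : ℝ → ℝ} {l B : ℝ} {K : ℝ≥0}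

theorem intervalIntegral_mul_sub_translates_eq (hg : Measurable g) (hgB : ∀ x, ‖g x‖ ≤ B)
    (hh : Continuous h) (hgl : Periodic g l) (hhl : Periodic h l) (s : ℝ) :
    ∫ u in 0..l, h u * (g (u + s) - g (u - s)) = ∫ v in 0..l, g v * (h (v - s) - h (v + s)) := by
  have shift : ∀ c, ∫ u in 0..l, g (u + c) * h u = ∫ v in 0..l, g v * h (v - c) := fun c => by
    have hper : Periodic (fun v => g v * h (v - c)) l := fun v => by
      simp only [hgl v, add_sub_right_comm, hhl (v - c)]
    simpa only [add_sub_cancel_right] using hper.intervalIntegral_comp_add_right c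
  have hint : ∀ c, IntervalIntegrable (fun u => g (u + c) * h u) volume 0 l := fun c =>
    hh.intervalIntegrable_mul_of_bounded (hg.comp (measurable_add_const c)) (fun _ => hgB _) 0 l
  have hint' : ∀ c, IntervalIntegrable (fun v => g v * h (v - c)) volume 0 l := fun c =>
    (hh.comp (continuous_sub_right c)).intervalIntegrable_mul_of_bounded hg hgB 0 l
  calc ∫ u in 0..l, h u * (g (u + s) - g (u - s))
      = (∫ u in 0..l, g (u + s) * h u) - ∫ u in 0..l, g (u + -s) * h u := by
        rw [← integral_sub (hint s) (hint (-s))]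
        congr 1 with u
        rw [← sub_eq_add_neg]; ring
    _ = (∫ v in 0..l, g v * h (v - s)) - ∫ v in 0..l, g v * h (v - -s) := by rw [shift, shift]
    _ = ∫ v in 0..l, g v * (h (v - s) - h (v + s)) := by
        rw [← integral_sub (hint' s) (hint' (-s))]
        congr 1 with v
        rw [sub_neg_eq_add]; ring

theorem norm_intervalIntegral_mul_sub_translates_le (hg : Measurable g) (hgB : ∀ x, ‖g x‖ ≤ B)
    (hh : LipschitzWith K h) (hgl : Periodic g l) (hhl : Periodic h l) (s : ℝ) :
    ‖∫ u in 0..l, h u * (g (u + s) - g (u - s))‖ ≤ 2 * B * K * |s| * |l| := by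
  rw [intervalIntegral_mul_sub_translates_eq hg hgB hh.continuous hgl hhl]
  refine (intervalIntegral.norm_integral_le_of_norm_le_const (C := 2 * B * K * |s|)
    fun v _ => ?_).trans_eq (by rw [sub_zero])
  have hB : 0 ≤ B := (norm_nonneg _).trans (hgB 0)
  have hdiff : ‖h (v - s) - h (v + s)‖ ≤ K * (2 * |s|) := by
    have := hh.dist_le_mul (v - s) (v + s)
    rwa [dist_eq_norm, Real.dist_eq, show v - s - (v + s) = -(2 * s) by ring, abs_neg, abs_mul,
      abs_two] at this
  calc ‖g v * (h (v - s) - h (v + s))‖ ≤ B * (K * (2 * |s|)) := by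
        rw [norm_mul]; exact mul_le_mul (hgB v) hdiff (norm_nonneg _) hB
    _ = 2 * B * K * |s| := by ring

theorem intervalIntegral_mul_weighted_integral_swap (hg : Measurable g) (hgB : ∀ x, ‖g x‖ ≤ B)
    (hh : Continuous h) (ε : ℝ) :
    ∫ u in 0..l, h u * ∫ t in 0..1, (1 - t) * (g (u + ε * t) - g (u - ε * t)) =
      ∫ t in 0..1, (1 - t) * ∫ u in 0..l, h u * (g (u + ε * t) - g (u - ε * t)) := by
  have hweight : IntegrableOn (fun p : ℝ × ℝ => h p.1 * (1 - p.2)) (Ι 0 l ×ˢ Ι 0 1) :=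
    ((hh.comp continuous_fst).mul (continuous_const.sub continuous_snd)).continuousOn
      |>.integrableOn_compact (isCompact_uIcc.prod isCompact_uIcc)
      |>.mono_set (prod_mono uIoc_subset_uIcc uIoc_subset_uIcc)
  have hF : IntegrableOn (uncurry fun u t => (g (u + ε * t) - g (u - ε * t)) * (h u * (1 - t)))
      (Ι 0 l ×ˢ Ι 0 1) := by
    refine hweight.bdd_mul (c := B + B) ?_ (ae_of_all _ fun p => ?_)
    · exact ((hg.comp (by fun_prop)).sub (hg.comp (by fun_prop))).aestronglyMeasurable
    · exact (norm_sub_le _ _).trans (add_le_add (hgB _) (hgB _))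
  calc ∫ u in 0..l, h u * ∫ t in 0..1, (1 - t) * (g (u + ε * t) - g (u - ε * t))
      = ∫ u in 0..l, ∫ t in 0..1, (g (u + ε * t) - g (u - ε * t)) * (h u * (1 - t)) := by
        congr 1 with u
        rw [← intervalIntegral.integral_const_mul]
        congr 1 with t
        ring
    _ = ∫ t in 0..1, ∫ u in 0..l, (g (u + ε * t) - g (u - ε * t)) * (h u * (1 - t)) :=
        intervalIntegral_intervalIntegral_swap hF
    _ = ∫ t in 0..1, (1 - t) * ∫ u in 0..l, h u * (g (u + ε * t) - g (u - ε * t)) := by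
        congr 1 with t
        rw [← intervalIntegral.integral_const_mul]
        congr 1 with u
        ring

theorem norm_intervalIntegral_mul_weighted_integral_le (hg : Measurable g)
    (hgB : ∀ x, ‖g x‖ ≤ B) (hh : LipschitzWith K h) (hgl : Periodic g l) (hhl : Periodic h l)
    (ε : ℝ) :
    ‖∫ u in 0..l, h u * ∫ t in 0..1, (1 - t) * (g (u + ε * t) - g (u - ε * t))‖ ≤
      2 * B * K * |l| * |ε| := by
  rw [intervalIntegral_mul_weighted_integral_swap hg hgB hh.continuous]
  refine (intervalIntegral.norm_integral_le_of_norm_le_const (C := 2 * B * K * |l| * |ε|)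
    fun t ht => ?_).trans_eq (by rw [sub_zero, abs_one, mul_one])
  rw [uIoc_of_le zero_le_one] at ht
  have hweight : ‖1 - t‖ ≤ 1 := by
    rw [Real.norm_eq_abs, abs_le]; constructor <;> linarith [ht.1, ht.2]
  have hshift : |ε * t| ≤ |ε| := by
    rw [abs_mul, abs_of_pos ht.1]; exact mul_le_of_le_one_right (abs_nonneg ε) ht.2
  have hB : 0 ≤ B := (norm_nonneg _).trans (hgB 0)
  calc ‖(1 - t) * ∫ u in 0..l, h u * (g (u + ε * t) - g (u - ε * t))‖
      ≤ 1 * (2 * B * K * |ε * t| * |l|) := by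
        rw [norm_mul]
        exact mul_le_mul hweight (norm_intervalIntegral_mul_sub_translates_le hg hgB hh hgl hhl _)
          (norm_nonneg _) zero_le_one
    _ ≤ 2 * B * K * |l| * |ε| := by
        rw [one_mul, mul_right_comm]; gcongr

theorem tendsto_intervalIntegral_mul_weighted_integral (hg : Measurable g)
    (hgB : ∀ x, ‖g x‖ ≤ B) (hh : LipschitzWith K h) (hgl : Periodic g l) (hhl : Periodic h l) :
    Tendsto (fun ε => ∫ u in 0..l, h u * ∫ t in 0..1, (1 - t) * (g (u + ε * t) - g (u - ε * t)))
      (𝓝 0) (𝓝 0) := by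
  refine squeeze_zero_norm (norm_intervalIntegral_mul_weighted_integral_le hg hgB hh hgl hhl) ?_
  exact (continuous_const.mul continuous_abs).tendsto' (0 : ℝ) 0 (by simp)

end SymmetricDifference

theorem cancellation_limit_general (l : ℝ) (C : NNReal) (m : ℝ) (hm : 0 < m)
    (f : ℝ → ℝ) (hper : Function.Periodic f l) (hlip : LipschitzWith C f)
    (hmf : ∀ u, m ≤ f u) :
    Tendsto (fun ε : ℝ => ∫ u in (0:ℝ)..l, (1 / f u) *
        ∫ t in (0:ℝ)..1, (1 - t) * (deriv f (u + ε * t) - deriv f (u - ε * t)))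
      (nhdsWithin 0 (Set.Ioi 0)) (nhds 0) := by
  have hrecip : Periodic (fun u => 1 / f u) l := fun u => by simp only [hper u]
  exact (tendsto_intervalIntegral_mul_weighted_integral (measurable_deriv f)
    (fun _ => norm_deriv_le_of_lipschitz hlip) (hlip.one_div_of_le hm hmf) hper.deriv
    hrecip).mono_left nhdsWithin_le_nhds

/-- The key cancellation: for a Lipschitz `f ≥ m > 0` on ℝ/lℤ,
`∫ (1/f(u)) ∫₀¹ (1-t)(f'(u+εt) - f'(u-εt)) dt du → 0` as `ε → 0⁺`. -/
theorem cancellation_limit (l : ℝ) (hl : 0 < l) (C : NNReal) (m : ℝ) (hm : 0 < m)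
    (f : ℝ → ℝ) (hper : Function.Periodic f l) (hlip : LipschitzWith C f)
    (hmf : ∀ u, m ≤ f u) :
    Tendsto (fun ε : ℝ => ∫ u in (0:ℝ)..l, (1 / f u) *
        ∫ t in (0:ℝ)..1, (1 - t) * (deriv f (u + ε * t) - deriv f (u - ε * t)))
      (nhdsWithin 0 (Set.Ioi 0)) (nhds 0) :=
  cancellation_limit_general l C m hm f hper hlip hmf
end
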